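/- Let Γ be the subgroup of GL(2g,ℤ) generated by the matrices A_i^{±1}, B_i^{±1} (1 ≤ i ≤ g) and C_j^{±2} (1 ≤ j ≤ g−1). Then for every M ∈ Γ, the reduction of M modulo 2 preserves each of the g coordinate planes: for every 1 ≤ i ≤ g, the (ℤ/2ℤ)-submodule of (ℤ/2ℤ)^{2g} spanned by e_i and e_{g+i} is mapped into itself by M mod 2. -/

import Mathlib

open Matrix

/-- The 2g×2g integer matrix with a single 1 at (0-based) position (a,b). -/
def E (g a b : ℕ) : Matrix (Fin (2*g)) (Fin (2*g)) ℤ :=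
  Matrix.of fun x y => if x.1 = a ∧ y.1 = b then 1 else 0

def A (g i : ℕ) : Matrix (Fin (2*g)) (Fin (2*g)) ℤ := 1 + E g i (g+i)

def B (g i : ℕ) : Matrix (Fin (2*g)) (Fin (2*g)) ℤ := 1 - E g (g+i) i

def C (g i : ℕ) : Matrix (Fin (2*g)) (Fin (2*g)) ℤ :=
  1 - E g i (g+i) - E g (i+1) (g+i+1) + E g (i+1) (g+i) + E g i (g+i+1)

/-- The generating set `{A_i^{±1}, B_i^{±1} (i < g), C_j^{±2} (j+1 < g)}` of the
subgroup `Γ`.  Since this set is symmetric under inversion, the subgroup it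
generates coincides with the submonoid it generates. -/
def gens (g : ℕ) : Set (Matrix (Fin (2*g)) (Fin (2*g)) ℤ) :=
  {M | (∃ i < g, M = A g i ∨ M = (A g i)⁻¹ ∨ M = B g i ∨ M = (B g i)⁻¹) ∨
       (∃ j, j + 1 < g ∧ (M = C g j ^ 2 ∨ M = (C g j ^ 2)⁻¹))}

lemma E_mul_E (g a b c d : ℕ) (h : b ≠ c) : E g a b * E g c d = 0 := by
  ext x y
  simp only [E, Matrix.mul_apply, Matrix.of_apply, Matrix.zero_apply]
  apply Finset.sum_eq_zero
  intro z _
  have hz : ¬((z : ℕ) = b) ∨ ¬((z : ℕ) = c) := by omega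
  rcases hz with hz | hz
  · rw [if_neg (show ¬((x : ℕ) = a ∧ (z : ℕ) = b) from fun hh => hz hh.2), zero_mul]
  · rw [if_neg (show ¬((z : ℕ) = c ∧ (y : ℕ) = d) from fun hh => hz hh.1), mul_zero]

lemma A_inv (g i : ℕ) (hg : 0 < g) : (A g i)⁻¹ = 1 - E g i (g+i) := by
  apply Matrix.inv_eq_right_inv
  have h0 : E g i (g+i) * E g i (g+i) = 0 := E_mul_E g _ _ _ _ (by omega)
  simp only [A, mul_sub, add_mul, one_mul, mul_one, h0]
  abel

lemma B_inv (g i : ℕ) (hg : 0 < g) : (B g i)⁻¹ = 1 + E g (g+i) i := by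
  apply Matrix.inv_eq_right_inv
  have h0 : E g (g+i) i * E g (g+i) i = 0 := E_mul_E g _ _ _ _ (by omega)
  simp only [B, mul_add, sub_mul, one_mul, mul_one, h0]
  abel

lemma C_sq (g j : ℕ) (hg : 2 ≤ g) : C g j * C g j = C g j + C g j - 1 := by
  have z : ∀ a b c d : ℕ, (b = g+j ∨ b = g+j+1) → (c = j ∨ c = j+1) →
      E g a b * E g c d = 0 := by
    intro a b c d hb hc
    exact E_mul_E g a b c d (by omega)
  simp only [C, mul_sub, sub_mul, mul_add, add_mul, mul_one, one_mul,
    z _ _ _ _ (Or.inl rfl) (Or.inl rfl), z _ _ _ _ (Or.inl rfl) (Or.inr rfl),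
    z _ _ _ _ (Or.inr rfl) (Or.inl rfl), z _ _ _ _ (Or.inr rfl) (Or.inr rfl)]
  abel

lemma C_sq_inv (g j : ℕ) (hg : 2 ≤ g) :
    (C g j ^ 2)⁻¹ = 1 + (1 - C g j) + (1 - C g j) := by
  apply Matrix.inv_eq_right_inv
  rw [pow_two]
  simp only [mul_add, add_mul, mul_sub, sub_mul, mul_one, one_mul, C_sq g j hg]
  abel

lemma gens_entry {g : ℕ} (hg : 2 ≤ g) {M : Matrix (Fin (2*g)) (Fin (2*g)) ℤ}
    (hM : M ∈ gens g) {i : ℕ} (hi : i < g) (x a : Fin (2*g))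
    (hx1 : (x : ℕ) ≠ i) (hx2 : (x : ℕ) ≠ g + i)
    (ha : (a : ℕ) = i ∨ (a : ℕ) = g + i) :
    ((M x a : ℤ) : ZMod 2) = 0 := by
  have hxa : x ≠ a := by
    intro h; subst h; rcases ha with h | h <;> omega
  rcases hM with ⟨i', hi', h⟩ | ⟨j, hj, h⟩
  · have h1 : (1 : Matrix (Fin (2*g)) (Fin (2*g)) ℤ) x a = 0 :=
      Matrix.one_apply_ne hxa
    have hEA : E g i' (g+i') x a = 0 := by
      simp only [E, Matrix.of_apply, ite_eq_right_iff]
      rintro ⟨hx, hA⟩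
      rcases ha with h' | h' <;> omega
    have hEB : E g (g+i') i' x a = 0 := by
      simp only [E, Matrix.of_apply, ite_eq_right_iff]
      rintro ⟨hx, hA⟩
      rcases ha with h' | h' <;> omega
    rcases h with rfl | rfl | rfl | rfl
    · simp [A, Matrix.add_apply, h1, hEA]
    · rw [A_inv g i' (by omega)]
      simp [Matrix.sub_apply, h1, hEA]
    · simp [B, Matrix.sub_apply, h1, hEB]
    · rw [B_inv g i' (by omega)]
      simp [Matrix.add_apply, h1, hEB]
  · have h1 : (1 : Matrix (Fin (2*g)) (Fin (2*g)) ℤ) x a = 0 :=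
      Matrix.one_apply_ne hxa
    have key : ∀ t : ZMod 2, t + t = 0 := by decide
    rcases h with rfl | rfl
    · rw [pow_two, C_sq g j hg]
      simp only [Matrix.sub_apply, Matrix.add_apply, h1]
      push_cast
      linear_combination key (((C g j x a : ℤ) : ZMod 2))
    · rw [C_sq_inv g j hg]
      simp only [Matrix.sub_apply, Matrix.add_apply, h1]
      push_cast
      linear_combination - key (((C g j x a : ℤ) : ZMod 2))

lemma mem_plane {g i : ℕ} (hi : i < g) (h1 : i < 2*g) (h2 : g + i < 2*g)
    (v : Fin (2*g) → ZMod 2)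
    (h : ∀ x : Fin (2*g), (x : ℕ) ≠ i → (x : ℕ) ≠ g + i → v x = 0) :
    v ∈ Submodule.span (ZMod 2)
      ({Pi.single ⟨i, h1⟩ 1, Pi.single ⟨g+i, h2⟩ 1} : Set (Fin (2*g) → ZMod 2)) := by
  have hne : i ≠ g + i := by omega
  have hv : v = v ⟨i, h1⟩ • (Pi.single ⟨i, h1⟩ 1 : Fin (2*g) → ZMod 2)
      + v ⟨g+i, h2⟩ • (Pi.single ⟨g+i, h2⟩ 1 : Fin (2*g) → ZMod 2) := by
    funext x
    by_cases hxi : (x : ℕ) = i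
    · have hx : x = ⟨i, h1⟩ := Fin.ext hxi
      subst hx
      simp [Pi.single_apply, Fin.ext_iff, hne]
      omega
    · by_cases hxgi : (x : ℕ) = g + i
      · have hx : x = ⟨g+i, h2⟩ := Fin.ext hxgi
        subst hx
        simp [Pi.single_apply, Fin.ext_iff, hne.symm]
        omega
      · have hx : v x = 0 := h x hxi hxgi
        have hxa : x ≠ (⟨i, h1⟩ : Fin (2*g)) := by
          intro hc; exact hxi (by rw [hc])
        have hxb : x ≠ (⟨g+i, h2⟩ : Fin (2*g)) := by
          intro hc; exact hxgi (by rw [hc])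
        simp [hx, Pi.single_apply, hxa, hxb]
  rw [hv]
  exact Submodule.add_mem _
    (Submodule.smul_mem _ _ (Submodule.subset_span (by simp)))
    (Submodule.smul_mem _ _ (Submodule.subset_span (by simp)))

/-- Every element `M` of the subgroup `Γ` generated by the `A_i^{±1}`, `B_i^{±1}`
and `C_j^{±2}` preserves, mod 2, each of the `g` coordinate planes
`span{e_i, e_{g+i}}` of `(ℤ/2ℤ)^{2g}`. -/
theorem stmt17 (g : ℕ) (hg : 2 ≤ g) :
    ∀ M ∈ Submonoid.closure (gens g), ∀ i : ℕ, ∀ hi : i < g,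
      ∀ v ∈ Submodule.span (ZMod 2)
          ({Pi.single ⟨i, by omega⟩ 1, Pi.single ⟨g+i, by omega⟩ 1} :
            Set (Fin (2*g) → ZMod 2)),
        (M.map (Int.cast : ℤ → ZMod 2)).mulVec v ∈
          Submodule.span (ZMod 2)
            ({Pi.single ⟨i, by omega⟩ 1, Pi.single ⟨g+i, by omega⟩ 1} :
              Set (Fin (2*g) → ZMod 2)) := by
  intro M hM
  induction hM using Submonoid.closure_induction with
  | one =>
      intro i hi v hv
      rw [show ((1 : Matrix (Fin (2*g)) (Fin (2*g)) ℤ).map (Int.cast : ℤ → ZMod 2))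
            = 1 from Matrix.map_one _ (by simp) (by simp), Matrix.one_mulVec]
      exact hv
  | mul x y hx hy ihx ihy =>
      intro i hi v hv
      have hmap : ((x * y).map (Int.cast : ℤ → ZMod 2))
          = x.map (Int.cast : ℤ → ZMod 2) * y.map (Int.cast : ℤ → ZMod 2) := by
        ext a b
        simp [Matrix.map_apply, Matrix.mul_apply]
      rw [hmap, ← Matrix.mulVec_mulVec]
      exact ihx i hi _ (ihy i hi v hv)
  | mem M hMg =>
      intro i hi v hv
      induction hv using Submodule.span_induction with
      | mem w hw =>
          simp only [Set.mem_insert_iff, Set.mem_singleton_iff] at hw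
          rcases hw with rfl | rfl <;>
          · rw [Matrix.mulVec_single]
            apply mem_plane hi
            intro x hx1 hx2
            simp only [Pi.smul_apply, Matrix.col_apply, MulOpposite.smul_eq_mul_unop,
              MulOpposite.unop_op, Matrix.map_apply, mul_one]
            exact gens_entry hg hMg hi x _ hx1 hx2
              (by first | exact Or.inl rfl | exact Or.inr rfl)
      | zero => simp
      | add u w hu hw ihu ihw =>
          rw [Matrix.mulVec_add]
          exact Submodule.add_mem _ ihu ihw
      | smul c u hu ihu =>
          rw [Matrix.mulVec_smul]
          exact Submodule.smul_mem _ _ ihu
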